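/- Let f : ℝⁿ → ℝ ∪ {+∞} be lower semi-continuous and S ⊆ ℝⁿ closed. If x ∈ dom f ∩ S is a local minimizer of f on S and the qualification condition ∂^∞ f(x) ∩ (−N(x;S)) = {0} holds, then 0 ∈ ∂f(x) + N(x;S). -/

import Mathlib

open Filter Topology Pointwise Set RealInnerProductSpace

noncomputable section

abbrev Eucl (n : ℕ) := EuclideanSpace ℝ (Fin n)

def IsSemialgebraic {n : ℕ} (S : Set (Eucl n)) : Prop :=
  ∃ (k : ℕ) (P Q : Fin k → Finset (MvPolynomial (Fin n) ℝ)),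
    S = ⋃ i, {x | (∀ p ∈ P i, MvPolynomial.eval (fun j => x j) p = 0) ∧
                  (∀ q ∈ Q i, 0 < MvPolynomial.eval (fun j => x j) q)}

def regNormalCone {n : ℕ} (S : Set (Eucl n)) (x : Eucl n) : Set (Eucl n) :=
  {v | ∀ ε > 0, ∃ δ > 0, ∀ y ∈ S, ‖y - x‖ < δ → (inner ℝ v (y - x) : ℝ) ≤ ε * ‖y - x‖}

def limNormalCone {n : ℕ} (S : Set (Eucl n)) (x : Eucl n) : Set (Eucl n) :=
  {v | ∃ xs vs : ℕ → Eucl n, (∀ k, xs k ∈ S) ∧ (∀ k, vs k ∈ regNormalCone S (xs k)) ∧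
       Tendsto xs atTop (𝓝 x) ∧ Tendsto vs atTop (𝓝 v)}

def initP {n : ℕ} (z : Eucl (n + 1)) : Eucl n := WithLp.toLp 2 (fun i : Fin n => z i.castSucc)

def snocP {n : ℕ} (x : Eucl n) (a : ℝ) : Eucl (n + 1) := WithLp.toLp 2 (Fin.snoc (fun i => x i) a : Fin (n + 1) → ℝ)

def epiSet {n : ℕ} (f : Eucl n → EReal) : Set (Eucl (n + 1)) :=
  {z | f (initP z) ≤ ((z (Fin.last n) : ℝ) : EReal)}

def limSubdiff {n : ℕ} (f : Eucl n → EReal) (x : Eucl n) : Set (Eucl n) :=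
  {v | snocP v (-1) ∈ limNormalCone (epiSet f) (snocP x (f x).toReal)}

def horizonSubdiff {n : ℕ} (f : Eucl n → EReal) (x : Eucl n) : Set (Eucl n) :=
  {v | snocP v 0 ∈ limNormalCone (epiSet f) (snocP x (f x).toReal)}

def SemialgebraicFn {n : ℕ} (f : Eucl n → EReal) : Prop :=
  IsSemialgebraic {z : Eucl (n + 1) | f (initP z) = ((z (Fin.last n) : ℝ) : EReal)}

def criticalSet {n : ℕ} (f : Eucl n → EReal) (S : Set (Eucl n)) : Set (Eucl n) :=
  {x | f x ≠ ⊤ ∧ x ∈ S ∧ (0 : Eucl n) ∈ limSubdiff f x + limNormalCone S x}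

def tangencyVariety {n : ℕ} (f : Eucl n → EReal) (S : Set (Eucl n)) : Set (Eucl n) :=
  {x | f x ≠ ⊤ ∧ x ∈ S ∧ ∃ μ : ℝ,
    (0 : Eucl n) ∈ limSubdiff f x + limNormalCone S x + ({μ • x} : Set (Eucl n))}

lemma snocP_castSucc {n} (x : Eucl n) (a : ℝ) (i : Fin n) : snocP x a i.castSucc = x i := by
  show Fin.snoc (α := fun _ => ℝ) (fun i => x i) a i.castSucc = x i; exact Fin.snoc_castSucc ..
lemma snocP_last {n} (x : Eucl n) (a : ℝ) : snocP x a (Fin.last n) = a := by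
  show Fin.snoc (α := fun _ => ℝ) (fun i => x i) a (Fin.last n) = a; exact Fin.snoc_last ..
lemma initP_snocP {n} (x : Eucl n) (a : ℝ) : initP (snocP x a) = x := by
  ext i; simp [initP, snocP_castSucc]
lemma snocP_initP {n} (z : Eucl (n+1)) : snocP (initP z) (z (Fin.last n)) = z := by
  ext i
  cases i using Fin.lastCases with
  | last => rw [snocP_last]
  | cast i => rw [snocP_castSucc]; rfl
lemma snocP_sub {n} (a c : Eucl n) (b d : ℝ) :
    snocP a b - snocP c d = snocP (a - c) (b - d) := by
  ext i
  cases i using Fin.lastCases with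
  | last => show snocP a b _ - snocP c d _ = _ ; rw [snocP_last, snocP_last, snocP_last]
  | cast i => show snocP a b _ - snocP c d _ = _
              rw [snocP_castSucc, snocP_castSucc, snocP_castSucc]; rfl
lemma snocP_zero {n} : snocP (0 : Eucl n) 0 = 0 := by
  ext i
  cases i using Fin.lastCases with
  | last => rw [snocP_last]; rfl
  | cast i => rw [snocP_castSucc]; rfl
lemma neg_snocP {n} (a : Eucl n) (b : ℝ) : -snocP a b = snocP (-a) (-b) := by
  have := snocP_sub (0 : Eucl n) a 0 b
  rw [snocP_zero, zero_sub, zero_sub, zero_sub] at this; exact this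
lemma inner_split {n} (u w : Eucl (n+1)) :
    (⟪u, w⟫ : ℝ) = ⟪initP u, initP w⟫ + u (Fin.last n) * w (Fin.last n) := by
  simp only [PiLp.inner_apply, RCLike.inner_apply, starRingEnd, RingHom.coe_comp,
    Function.comp_apply, RingHom.id_apply]
  rw [Fin.sum_univ_castSucc, mul_comm (w.ofLp (Fin.last n))]; rfl
lemma norm_sq_split {n} (w : Eucl (n+1)) :
    ‖w‖^2 = ‖initP w‖^2 + (w (Fin.last n))^2 := by
  rw [← real_inner_self_eq_norm_sq, ← real_inner_self_eq_norm_sq, inner_split, sq]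
lemma norm_initP_le {n} (w : Eucl (n+1)) : ‖initP w‖ ≤ ‖w‖ := by
  have h := norm_sq_split w
  nlinarith [norm_nonneg (initP w), norm_nonneg w, sq_nonneg (w (Fin.last n))]
lemma norm_snocP_zero {n} (a : Eucl n) : ‖snocP a 0‖ = ‖a‖ := by
  have h := norm_sq_split (snocP a 0)
  rw [initP_snocP, snocP_last] at h
  nlinarith [norm_nonneg (snocP a 0), norm_nonneg a]
lemma continuous_initP {n} : Continuous (initP (n:=n)) := by
  unfold initP; fun_prop
lemma continuous_snocP {n} (c : ℝ) : Continuous (fun x : Eucl n => snocP x c) := by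
  show Continuous fun x : Eucl n => WithLp.toLp 2 ((snocP x c).ofLp)
  apply (PiLp.continuous_toLp 2 _).comp
  apply continuous_pi
  intro i
  cases i using Fin.lastCases with
  | last => simp only [snocP_last]; exact continuous_const
  | cast i => simp only [snocP_castSucc]; fun_prop
lemma continuous_lastP {n} : Continuous (fun z : Eucl (n+1) => z (Fin.last n)) := by
  fun_prop

lemma zero_mem_reg {n} (S : Set (Eucl n)) (x : Eucl n) : (0 : Eucl n) ∈ regNormalCone S x := by
  intro ε hε
  exact ⟨1, one_pos, fun y _ _ => by rw [inner_zero_left]; positivity⟩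

lemma smul_mem_reg {n} {S : Set (Eucl n)} {x v : Eucl n} {c : ℝ} (hc : 0 ≤ c)
    (hv : v ∈ regNormalCone S x) : c • v ∈ regNormalCone S x := by
  rcases eq_or_lt_of_le hc with h | h
  · rw [← h, zero_smul]; exact zero_mem_reg S x
  · intro ε hε
    obtain ⟨δ, hδ, hd⟩ := hv (ε / c) (by positivity)
    refine ⟨δ, hδ, fun y hy hn => ?_⟩
    rw [real_inner_smul_left]
    calc c * ⟪v, y - x⟫ ≤ c * (ε / c * ‖y - x‖) :=
          mul_le_mul_of_nonneg_left (hd y hy hn) hc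
      _ = ε * ‖y - x‖ := by field_simp

lemma reg_subset_lim {n} {S : Set (Eucl n)} {x : Eucl n} (hx : x ∈ S) :
    regNormalCone S x ⊆ limNormalCone S x := fun v hv =>
  ⟨fun _ => x, fun _ => v, fun _ => hx, fun _ => hv, tendsto_const_nhds, tendsto_const_nhds⟩

/-- Fermat rule for a linear-plus-quadratic penalty minimized locally over `C`. -/
lemma fermat_reg {n} {C : Set (Eucl n)} {y : Eucl n} (v b c : Eucl n) {k M : ℝ}
    (hk : 0 ≤ k) (hM : 0 ≤ M) {δ : ℝ} (hδ : 0 < δ)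
    (hmin : ∀ z ∈ C, ‖z - y‖ < δ →
      -⟪v, y⟫ + k * ‖y - b‖^2 + M * ‖y - c‖^2 ≤ -⟪v, z⟫ + k * ‖z - b‖^2 + M * ‖z - c‖^2) :
    v - (2*k) • (y - b) - (2*M) • (y - c) ∈ regNormalCone C y := by
  intro ε hε
  refine ⟨min δ (ε / (k + M + 1)), by positivity, fun z hz hn => ?_⟩
  have hn1 : ‖z - y‖ < δ := lt_of_lt_of_le hn (min_le_left _ _)
  have hn2 : ‖z - y‖ ≤ ε / (k + M + 1) := le_of_lt (lt_of_lt_of_le hn (min_le_right _ _))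
  have hmin' := hmin z hz hn1
  have e1 : ‖z - b‖^2 = ‖z - y‖^2 + 2 * ⟪z - y, y - b⟫ + ‖y - b‖^2 := by
    have : z - b = (z - y) + (y - b) := by abel
    rw [this, norm_add_sq_real]
  have e2 : ‖z - c‖^2 = ‖z - y‖^2 + 2 * ⟪z - y, y - c⟫ + ‖y - c‖^2 := by
    have : z - c = (z - y) + (y - c) := by abel
    rw [this, norm_add_sq_real]
  have e3 : (⟪v - (2*k) • (y - b) - (2*M) • (y - c), z - y⟫ : ℝ)
      = ⟪v, z - y⟫ - 2*k*⟪z - y, y - b⟫ - 2*M*⟪z - y, y - c⟫ := by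
    rw [inner_sub_left, inner_sub_left, real_inner_smul_left, real_inner_smul_left,
      real_inner_comm (y-b), real_inner_comm (y-c)]
  have e4 : (⟪v, z - y⟫ : ℝ) = ⟪v, z⟫ - ⟪v, y⟫ := by rw [inner_sub_right]
  have key : (⟪v - (2*k) • (y - b) - (2*M) • (y - c), z - y⟫ : ℝ) ≤ (k + M) * ‖z - y‖^2 := by
    rw [e3, e4]
    nlinarith [hmin']
  have hnn : (0:ℝ) ≤ ‖z - y‖ := norm_nonneg _
  have : (k + M) * ‖z - y‖^2 ≤ ε * ‖z - y‖ := by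
    have h2 : (k + M) * ‖z - y‖ ≤ ε := by
      calc (k + M) * ‖z - y‖ ≤ (k + M) * (ε / (k + M + 1)) := by
            exact mul_le_mul_of_nonneg_left hn2 (by linarith)
        _ ≤ ε := by
            rw [mul_div_assoc']
            rw [div_le_iff₀ (by positivity)]
            nlinarith
    nlinarith
  linarith [key, this]

set_option maxHeartbeats 1000000 in
lemma fuzzy_rule {m : ℕ} {C₁ C₂ : Set (Eucl m)} (h₁ : IsClosed C₁) (h₂ : IsClosed C₂)
    {x0 : Eucl m} (hx₁ : x0 ∈ C₁) (hx₂ : x0 ∈ C₂) {v : Eucl m}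
    (hv : v ∈ regNormalCone (C₁ ∩ C₂) x0) {r : ℝ} (hr : 0 < r) :
    ∃ y₁ y₂ w₁ w₂ : Eucl m, y₁ ∈ C₁ ∧ y₂ ∈ C₂ ∧ w₁ ∈ regNormalCone C₁ y₁ ∧
      w₂ ∈ regNormalCone C₂ y₂ ∧ ‖y₁ - x0‖ ≤ r ∧ ‖y₂ - x0‖ ≤ r ∧ ‖w₁ + w₂ - v‖ ≤ r := by
  obtain ⟨ε, hεdef, hε⟩ : ∃ ε : ℝ, ε = r / 8 ∧ 0 < ε := ⟨r/8, rfl, by positivity⟩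
  obtain ⟨δ, hδ, hreg⟩ := hv ε hε
  obtain ⟨M, hMdef, hM1, hMpos⟩ : ∃ M : ℝ, M = 2*‖v‖/δ + 1 ∧ 1 ≤ M ∧ 0 < M := by
    have h0 : (0:ℝ) ≤ 2*‖v‖/δ := by positivity
    exact ⟨2*‖v‖/δ + 1, rfl, by linarith, by linarith⟩
  have hv0 : (0:ℝ) ≤ ‖v‖ := norm_nonneg v
  have hvM : ‖v‖ / M < δ / 2 := by
    rw [div_lt_iff₀ hMpos, mul_comm]
    have : M * (δ / 2) = ‖v‖ + δ / 2 := by rw [hMdef]; field_simp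
    rw [this]; linarith
  obtain ⟨ρ, hρdef, hρ⟩ : ∃ ρ : ℝ, ρ = δ / 2 ∧ 0 < ρ := ⟨δ/2, rfl, by positivity⟩
  have hvMρ : ‖v‖ / M < ρ := hρdef ▸ hvM
  set K : Set (Eucl m × Eucl m) :=
    (C₁ ∩ Metric.closedBall x0 ρ) ×ˢ (C₂ ∩ Metric.closedBall x0 ρ) with hKdef
  have hK : IsCompact K :=
    ((isCompact_closedBall x0 ρ).inter_left h₁).prod ((isCompact_closedBall x0 ρ).inter_left h₂)
  have hx0K : (x0, x0) ∈ K := by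
    refine ⟨⟨hx₁, ?_⟩, ⟨hx₂, ?_⟩⟩ <;> simp [Metric.mem_closedBall, hρ.le]
  have hmin : ∀ k : ℕ, ∃ p ∈ K, ∀ q ∈ K,
      -⟪v, p.1 - x0⟫ + ((k:ℝ)+1) * ‖p.1 - p.2‖^2 + M*‖p.1 - x0‖^2 + M*‖p.2 - x0‖^2
      ≤ -⟪v, q.1 - x0⟫ + ((k:ℝ)+1) * ‖q.1 - q.2‖^2 + M*‖q.1 - x0‖^2 + M*‖q.2 - x0‖^2 := by
    intro k
    have hφcont : Continuous (fun p : Eucl m × Eucl m =>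
        -⟪v, p.1 - x0⟫ + ((k:ℝ)+1) * ‖p.1 - p.2‖^2 + M*‖p.1 - x0‖^2 + M*‖p.2 - x0‖^2) := by
      apply Continuous.add; apply Continuous.add; apply Continuous.add
      · exact (Continuous.inner continuous_const (continuous_fst.sub continuous_const)).neg
      · exact continuous_const.mul (((continuous_fst.sub continuous_snd).norm).pow 2)
      · exact continuous_const.mul (((continuous_fst.sub continuous_const).norm).pow 2)
      · exact continuous_const.mul (((continuous_snd.sub continuous_const).norm).pow 2)
    obtain ⟨p, hp, hm⟩ := hK.exists_isMinOn ⟨(x0,x0), hx0K⟩ hφcont.continuousOn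
    exact ⟨p, hp, fun q hq => hm hq⟩
  choose p hpK hpmin using hmin
  have hzero : ∀ k : ℕ, -⟪v, (p k).1 - x0⟫ + ((k:ℝ)+1) * ‖(p k).1 - (p k).2‖^2
      + M*‖(p k).1 - x0‖^2 + M*‖(p k).2 - x0‖^2 ≤ 0 := by
    intro k
    have := hpmin k (x0, x0) hx0K
    simpa using this
  have hineq : ∀ k : ℕ, ((k:ℝ)+1) * ‖(p k).1 - (p k).2‖^2 + M*‖(p k).1 - x0‖^2
      + M*‖(p k).2 - x0‖^2 ≤ ‖v‖ * ‖(p k).1 - x0‖ := by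
    intro k
    have h0 := hzero k
    have hCS : (⟪v, (p k).1 - x0⟫ : ℝ) ≤ ‖v‖ * ‖(p k).1 - x0‖ := real_inner_le_norm v _
    linarith
  have hb1 : ∀ k : ℕ, M * ‖(p k).1 - x0‖ ≤ ‖v‖ := by
    intro k
    have h := hineq k
    have hk1 : (0:ℝ) ≤ ((k:ℝ)+1) * ‖(p k).1 - (p k).2‖^2 := by positivity
    have hk2 : (0:ℝ) ≤ M*‖(p k).2 - x0‖^2 := by positivity
    have ha0 : (0:ℝ) ≤ ‖(p k).1 - x0‖ := norm_nonneg _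
    rcases (eq_or_lt_of_le ha0).imp Eq.symm id with h0 | h0
    · rw [h0, mul_zero]; exact hv0
    · nlinarith
  have hb2 : ∀ k : ℕ, M * ‖(p k).2 - x0‖ ≤ ‖v‖ := by
    intro k
    have h := hineq k
    have hk1 : (0:ℝ) ≤ ((k:ℝ)+1) * ‖(p k).1 - (p k).2‖^2 := by positivity
    have hk2 : (0:ℝ) ≤ M*‖(p k).1 - x0‖^2 := by positivity
    have h1 := hb1 k
    have ha0 : (0:ℝ) ≤ ‖(p k).1 - x0‖ := norm_nonneg _
    have hb0 : (0:ℝ) ≤ ‖(p k).2 - x0‖ := norm_nonneg _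
    have hsq : (M * ‖(p k).2 - x0‖)^2 ≤ ‖v‖^2 := by nlinarith
    nlinarith [mul_nonneg hMpos.le hb0]
  have hb3 : ∀ k : ℕ, ‖(p k).1 - (p k).2‖^2 ≤ ‖v‖^2 / ((k:ℝ)+1) := by
    intro k
    have h := hineq k
    have hk2 : (0:ℝ) ≤ M*‖(p k).1 - x0‖^2 := by positivity
    have hk3 : (0:ℝ) ≤ M*‖(p k).2 - x0‖^2 := by positivity
    have h1 := hb1 k
    have ha0 : (0:ℝ) ≤ ‖(p k).1 - x0‖ := norm_nonneg _
    have hkpos : (0:ℝ) < (k:ℝ)+1 := by positivity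
    rw [le_div_iff₀ hkpos]
    nlinarith [mul_nonneg hv0 ha0, mul_nonneg (mul_nonneg hv0 ha0) (by linarith : (0:ℝ) ≤ M - 1)]
  obtain ⟨q, hqK, σ, hσ, hconv⟩ := hK.tendsto_subseq hpK
  have hconv1 : Tendsto (fun j => (p (σ j)).1) atTop (𝓝 q.1) :=
    (continuous_fst.tendsto q).comp hconv
  have hconv2 : Tendsto (fun j => (p (σ j)).2) atTop (𝓝 q.2) :=
    (continuous_snd.tendsto q).comp hconv
  have hq12 : q.1 = q.2 := by
    have hsq : Tendsto (fun j => ‖(p (σ j)).1 - (p (σ j)).2‖^2) atTop (𝓝 (‖q.1 - q.2‖^2)) :=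
      ((continuous_norm.comp (continuous_fst.sub continuous_snd)).pow 2).tendsto q |>.comp hconv
    have hup : Tendsto (fun j : ℕ => ‖v‖^2 / ((j:ℝ)+1)) atTop (𝓝 0) := by
      have h2 : Tendsto (fun n : ℕ => (n:ℝ) + 1) atTop atTop :=
        tendsto_atTop_add_const_right _ 1 tendsto_natCast_atTop_atTop
      exact Tendsto.div_atTop tendsto_const_nhds h2
    have hsq0 : Tendsto (fun j => ‖(p (σ j)).1 - (p (σ j)).2‖^2) atTop (𝓝 0) := by
      apply squeeze_zero (fun j => by positivity) _ hup
      intro j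
      calc ‖(p (σ j)).1 - (p (σ j)).2‖^2 ≤ ‖v‖^2 / ((σ j : ℝ)+1) := hb3 (σ j)
        _ ≤ ‖v‖^2 / ((j:ℝ)+1) := by
            have hjσ : (j:ℝ) ≤ (σ j : ℝ) := Nat.cast_le.2 hσ.le_apply
            apply div_le_div_of_nonneg_left (by positivity) (by positivity)
            linarith
    have := tendsto_nhds_unique hsq hsq0
    have hn0 : ‖q.1 - q.2‖ = 0 := by nlinarith [norm_nonneg (q.1 - q.2)]
    rwa [norm_eq_zero, sub_eq_zero] at hn0
  have hql : -⟪v, q.1 - x0⟫ + M*‖q.1 - x0‖^2 + M*‖q.2 - x0‖^2 ≤ 0 := by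
    have hc : Continuous (fun pp : Eucl m × Eucl m =>
        -⟪v, pp.1 - x0⟫ + M*‖pp.1 - x0‖^2 + M*‖pp.2 - x0‖^2) := by
      apply Continuous.add; apply Continuous.add
      · exact (Continuous.inner continuous_const (continuous_fst.sub continuous_const)).neg
      · exact continuous_const.mul (((continuous_fst.sub continuous_const).norm).pow 2)
      · exact continuous_const.mul (((continuous_snd.sub continuous_const).norm).pow 2)
    apply le_of_tendsto ((hc.tendsto q).comp hconv)
    apply Eventually.of_forall
    intro j
    have h0 := hzero (σ j)
    have hk1 : (0:ℝ) ≤ ((σ j : ℝ)+1) * ‖(p (σ j)).1 - (p (σ j)).2‖^2 := by positivity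
    simp only [Function.comp_apply]
    linarith
  have hq1C : q.1 ∈ C₁ ∩ C₂ := ⟨hqK.1.1, hq12 ▸ hqK.2.1⟩
  have hq1b : ‖q.1 - x0‖ ≤ ρ := by
    have := hqK.1.2
    rwa [Metric.mem_closedBall, dist_eq_norm] at this
  have hqreg : (⟪v, q.1 - x0⟫ : ℝ) ≤ ε * ‖q.1 - x0‖ := by
    apply hreg q.1 hq1C
    calc ‖q.1 - x0‖ ≤ ρ := hq1b
      _ < δ := by rw [hρdef]; linarith
  have hqsmall : M * ‖q.1 - x0‖ ≤ ε / 2 := by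
    rw [← hq12] at hql
    have ha0 : (0:ℝ) ≤ ‖q.1 - x0‖ := norm_nonneg _
    rcases (eq_or_lt_of_le ha0).imp Eq.symm id with h0 | h0
    · rw [h0, mul_zero]; positivity
    · nlinarith
  have hev1 : ∀ᶠ j in atTop, M * ‖(p (σ j)).1 - x0‖ < ε := by
    have hc : Tendsto (fun j => M * ‖(p (σ j)).1 - x0‖) atTop (𝓝 (M * ‖q.1 - x0‖)) :=
      tendsto_const_nhds.mul
        (((continuous_norm.comp (continuous_id.sub continuous_const)).tendsto q.1).comp hconv1)
    exact hc.eventually_lt_const (by linarith)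
  have hev2 : ∀ᶠ j in atTop, M * ‖(p (σ j)).2 - x0‖ < ε := by
    have hc : Tendsto (fun j => M * ‖(p (σ j)).2 - x0‖) atTop (𝓝 (M * ‖q.2 - x0‖)) :=
      tendsto_const_nhds.mul
        (((continuous_norm.comp (continuous_id.sub continuous_const)).tendsto q.2).comp hconv2)
    refine hc.eventually_lt_const ?_
    rw [← hq12]; linarith
  obtain ⟨j0, hj1, hj2⟩ := (hev1.and hev2).exists
  have hy1C : (p (σ j0)).1 ∈ C₁ := (hpK (σ j0)).1.1
  have hy2C : (p (σ j0)).2 ∈ C₂ := (hpK (σ j0)).2.1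
  set k := σ j0
  set y1 := (p k).1 with hy1def
  set y2 := (p k).2 with hy2def
  have hy1n : M * ‖y1 - x0‖ < ε := hj1
  have hy2n : M * ‖y2 - x0‖ < ε := hj2
  have hy1r : M * ‖y1 - x0‖ ≤ ‖v‖ := hb1 k
  have hy2r : M * ‖y2 - x0‖ ≤ ‖v‖ := hb2 k
  have hy1ρ : ‖y1 - x0‖ < ρ := by
    rw [← le_div_iff₀' hMpos] at hy1r
    exact lt_of_le_of_lt hy1r hvMρ
  have hy2ρ : ‖y2 - x0‖ < ρ := by
    rw [← le_div_iff₀' hMpos] at hy2r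
    exact lt_of_le_of_lt hy2r hvMρ
  have hf1 : v - (2*((k:ℝ)+1)) • (y1 - y2) - (2*M) • (y1 - x0) ∈ regNormalCone C₁ y1 := by
    apply fermat_reg v y2 x0 (by positivity) hMpos.le
      (show (0:ℝ) < ρ - ‖y1 - x0‖ by linarith)
    intro z hz hzn
    have hzK : (z, y2) ∈ K := by
      refine ⟨⟨hz, ?_⟩, (hpK k).2⟩
      rw [Metric.mem_closedBall, dist_eq_norm]
      calc ‖z - x0‖ ≤ ‖z - y1‖ + ‖y1 - x0‖ := norm_sub_le_norm_sub_add_norm_sub z y1 x0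
        _ ≤ ρ := by linarith
    have hm := hpmin k (z, y2) hzK
    rw [← hy1def, ← hy2def] at hm
    have e1 : (⟪v, y1 - x0⟫ : ℝ) = ⟪v, y1⟫ - ⟪v, x0⟫ := inner_sub_right v y1 x0
    have e2 : (⟪v, z - x0⟫ : ℝ) = ⟪v, z⟫ - ⟪v, x0⟫ := inner_sub_right v z x0
    simp only at hm
    linarith
  have hf2 : (0:Eucl m) - (2*((k:ℝ)+1)) • (y2 - y1) - (2*M) • (y2 - x0)
      ∈ regNormalCone C₂ y2 := by
    apply fermat_reg (0:Eucl m) y1 x0 (by positivity) hMpos.le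
      (show (0:ℝ) < ρ - ‖y2 - x0‖ by linarith)
    intro z hz hzn
    have hzK : (y1, z) ∈ K := by
      refine ⟨(hpK k).1, ⟨hz, ?_⟩⟩
      rw [Metric.mem_closedBall, dist_eq_norm]
      calc ‖z - x0‖ ≤ ‖z - y2‖ + ‖y2 - x0‖ := norm_sub_le_norm_sub_add_norm_sub z y2 x0
        _ ≤ ρ := by linarith
    have hm := hpmin k (y1, z) hzK
    rw [← hy1def, ← hy2def] at hm
    simp only at hm
    rw [inner_zero_left, inner_zero_left, norm_sub_rev y2 y1, norm_sub_rev z y1]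
    linarith
  refine ⟨y1, y2, _, _, hy1C, hy2C, hf1, hf2, ?_, ?_, ?_⟩
  · nlinarith [norm_nonneg (y1 - x0)]
  · nlinarith [norm_nonneg (y2 - x0)]
  · have hs : (2*((k:ℝ)+1)) • (y1 - y2) + (2*((k:ℝ)+1)) • (y2 - y1) = 0 := by
      rw [← smul_add]
      have h0 : (y1 - y2) + (y2 - y1) = 0 := by abel
      rw [h0, smul_zero]
    have halg : (v - (2*((k:ℝ)+1)) • (y1 - y2) - (2*M) • (y1 - x0))
        + ((0:Eucl m) - (2*((k:ℝ)+1)) • (y2 - y1) - (2*M) • (y2 - x0)) - v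
        = -((2*M) • (y1 - x0)) - (2*M) • (y2 - x0) := by
      have expand : (v - (2*((k:ℝ)+1)) • (y1 - y2) - (2*M) • (y1 - x0))
        + ((0:Eucl m) - (2*((k:ℝ)+1)) • (y2 - y1) - (2*M) • (y2 - x0)) - v
        = -((2*((k:ℝ)+1)) • (y1 - y2) + (2*((k:ℝ)+1)) • (y2 - y1))
          + (-((2*M) • (y1 - x0)) - (2*M) • (y2 - x0)) := by abel
      rw [expand, hs, neg_zero, zero_add]
    rw [halg]
    have h2 : ‖(2*M) • (y1 - x0)‖ = 2*M*‖y1 - x0‖ := by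
      rw [norm_smul, Real.norm_eq_abs, abs_of_pos (by positivity)]
    have h3 : ‖(2*M) • (y2 - x0)‖ = 2*M*‖y2 - x0‖ := by
      rw [norm_smul, Real.norm_eq_abs, abs_of_pos (by positivity)]
    calc ‖-((2*M) • (y1 - x0)) - (2*M) • (y2 - x0)‖
        ≤ ‖-((2*M) • (y1 - x0))‖ + ‖(2*M) • (y2 - x0)‖ := norm_sub_le _ _
      _ = 2*M*‖y1 - x0‖ + 2*M*‖y2 - x0‖ := by rw [norm_neg, h2, h3]
      _ ≤ 2*ε + 2*ε := by nlinarith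
      _ ≤ r := by rw [hεdef] at hε ⊢; linarith

set_option maxHeartbeats 1000000 in
lemma exact_rule {m : ℕ} {C₁ C₂ : Set (Eucl m)} (h₁ : IsClosed C₁) (h₂ : IsClosed C₂)
    {x0 : Eucl m}
    (hq : ∀ u : Eucl m, u ∈ limNormalCone C₁ x0 → -u ∈ limNormalCone C₂ x0 → u = 0)
    {v : Eucl m} (hv : v ∈ limNormalCone (C₁ ∩ C₂) x0) :
    ∃ v₁ ∈ limNormalCone C₁ x0, ∃ v₂ ∈ limNormalCone C₂ x0, v₁ + v₂ = v := by
  obtain ⟨xs, vs, hxs, hvs, hxt, hvt⟩ := hv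
  have key : ∀ k : ℕ, ∃ y₁ y₂ w₁ w₂ : Eucl m, y₁ ∈ C₁ ∧ y₂ ∈ C₂ ∧
      w₁ ∈ regNormalCone C₁ y₁ ∧ w₂ ∈ regNormalCone C₂ y₂ ∧
      ‖y₁ - xs k‖ ≤ 1/((k:ℝ)+1) ∧ ‖y₂ - xs k‖ ≤ 1/((k:ℝ)+1) ∧
      ‖w₁ + w₂ - vs k‖ ≤ 1/((k:ℝ)+1) := fun k =>
    fuzzy_rule h₁ h₂ (hxs k).1 (hxs k).2 (hvs k) (by positivity)
  choose y₁ y₂ w₁ w₂ hy₁C hy₂C hw₁ hw₂ hy₁n hy₂n hwn using key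
  have hinv : Tendsto (fun k : ℕ => 1/((k:ℝ)+1)) atTop (𝓝 0) := by
    have h2 : Tendsto (fun n : ℕ => (n:ℝ) + 1) atTop atTop :=
      tendsto_atTop_add_const_right _ 1 tendsto_natCast_atTop_atTop
    exact Tendsto.div_atTop tendsto_const_nhds h2
  have hxs0 : Tendsto (fun k => ‖xs k - x0‖) atTop (𝓝 0) := by
    rw [← tendsto_iff_norm_sub_tendsto_zero]; exact hxt
  have hvs0 : Tendsto (fun k => ‖vs k - v‖) atTop (𝓝 0) := by
    rw [← tendsto_iff_norm_sub_tendsto_zero]; exact hvt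
  have hg0 : Tendsto (fun k : ℕ => 1/((k:ℝ)+1) + ‖xs k - x0‖) atTop (𝓝 0) := by
    simpa using hinv.add hxs0
  have hg1 : Tendsto (fun k : ℕ => 1/((k:ℝ)+1) + ‖vs k - v‖) atTop (𝓝 0) := by
    simpa using hinv.add hvs0
  have hy₁t : Tendsto y₁ atTop (𝓝 x0) := by
    rw [tendsto_iff_norm_sub_tendsto_zero]
    refine squeeze_zero (fun k => norm_nonneg _) (fun k => ?_) hg0
    calc ‖y₁ k - x0‖ ≤ ‖y₁ k - xs k‖ + ‖xs k - x0‖ := norm_sub_le_norm_sub_add_norm_sub _ _ _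
      _ ≤ 1/((k:ℝ)+1) + ‖xs k - x0‖ := by have := hy₁n k; linarith
  have hy₂t : Tendsto y₂ atTop (𝓝 x0) := by
    rw [tendsto_iff_norm_sub_tendsto_zero]
    refine squeeze_zero (fun k => norm_nonneg _) (fun k => ?_) hg0
    calc ‖y₂ k - x0‖ ≤ ‖y₂ k - xs k‖ + ‖xs k - x0‖ := norm_sub_le_norm_sub_add_norm_sub _ _ _
      _ ≤ 1/((k:ℝ)+1) + ‖xs k - x0‖ := by have := hy₂n k; linarith
  have hst : Tendsto (fun k => w₁ k + w₂ k) atTop (𝓝 v) := by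
    rw [tendsto_iff_norm_sub_tendsto_zero]
    refine squeeze_zero (fun k => norm_nonneg _) (fun k => ?_) hg1
    calc ‖w₁ k + w₂ k - v‖ ≤ ‖w₁ k + w₂ k - vs k‖ + ‖vs k - v‖ := by
          have heq : w₁ k + w₂ k - v = (w₁ k + w₂ k - vs k) + (vs k - v) := by abel
          rw [heq]; exact norm_add_le _ _
      _ ≤ 1/((k:ℝ)+1) + ‖vs k - v‖ := by have := hwn k; linarith
  by_cases hbd : ∃ R : ℝ, ∃ᶠ k in atTop, ‖w₂ k‖ ≤ R
  · obtain ⟨R, hR⟩ := hbd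
    obtain ⟨φ, hφ, hφR⟩ := Filter.extraction_of_frequently_atTop hR
    have hmem : ∀ j, (w₂ ∘ φ) j ∈ Metric.closedBall (0 : Eucl m) R := by
      intro j; rw [Metric.mem_closedBall, dist_zero_right]; exact hφR j
    obtain ⟨v₂, _, ψ, hψ, hψt⟩ := (isCompact_closedBall (0:Eucl m) R).tendsto_subseq hmem
    have hσ : StrictMono (φ ∘ ψ) := hφ.comp hψ
    have h2t : Tendsto (fun j => w₂ (φ (ψ j))) atTop (𝓝 v₂) := hψt
    have hsum : Tendsto (fun j => w₁ (φ (ψ j)) + w₂ (φ (ψ j))) atTop (𝓝 v) :=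
      hst.comp hσ.tendsto_atTop
    have h1t : Tendsto (fun j => w₁ (φ (ψ j))) atTop (𝓝 (v - v₂)) := by
      have := hsum.sub h2t
      simpa using this
    refine ⟨v - v₂, ?_, v₂, ?_, by abel⟩
    · exact ⟨fun j => y₁ (φ (ψ j)), fun j => w₁ (φ (ψ j)), fun j => hy₁C _, fun j => hw₁ _,
        hy₁t.comp hσ.tendsto_atTop, h1t⟩
    · exact ⟨fun j => y₂ (φ (ψ j)), fun j => w₂ (φ (ψ j)), fun j => hy₂C _, fun j => hw₂ _,
        hy₂t.comp hσ.tendsto_atTop, h2t⟩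
  · push_neg at hbd
    have hub : Tendsto (fun k => ‖w₂ k‖) atTop atTop := by
      rw [tendsto_atTop]
      intro R
      have h1 : ∀ᶠ k in atTop, ¬(‖w₂ k‖ ≤ R) := (hbd R).mono fun k hk => not_le.2 hk
      filter_upwards [h1] with k hk
      exact le_of_lt (lt_of_not_ge hk)
    obtain ⟨N, hN⟩ := Filter.eventually_atTop.1 (hub.eventually_ge_atTop 1)
    have hmem : ∀ j : ℕ, ‖w₂ (j + N)‖⁻¹ • w₂ (j + N) ∈ Metric.closedBall (0 : Eucl m) 1 := by
      intro j
      have h1 : (1:ℝ) ≤ ‖w₂ (j + N)‖ := hN _ (Nat.le_add_left N j)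
      rw [Metric.mem_closedBall, dist_zero_right, norm_smul, norm_inv, norm_norm]
      rw [inv_mul_le_iff₀ (by linarith), mul_one]
    obtain ⟨uu, _, ψ, hψ, hψt⟩ := (isCompact_closedBall (0:Eucl m) 1).tendsto_subseq hmem
    have hσt : Tendsto (fun j : ℕ => ψ j + N) atTop atTop :=
      tendsto_atTop_mono (fun j => Nat.le_add_right _ _) hψ.tendsto_atTop
    have hnorm1 : ∀ j : ℕ, ‖‖w₂ (ψ j + N)‖⁻¹ • w₂ (ψ j + N)‖ = 1 := by
      intro j
      have h1 : (1:ℝ) ≤ ‖w₂ (ψ j + N)‖ := hN _ (Nat.le_add_left N (ψ j))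
      rw [norm_smul, norm_inv, norm_norm, inv_mul_cancel₀ (by linarith)]
    have hu1 : ‖uu‖ = 1 := by
      have h1 : Tendsto (fun j => ‖‖w₂ (ψ j + N)‖⁻¹ • w₂ (ψ j + N)‖) atTop (𝓝 ‖uu‖) :=
        (continuous_norm.tendsto uu).comp hψt
      have h2 : Tendsto (fun j : ℕ => (1:ℝ)) atTop (𝓝 1) := tendsto_const_nhds
      exact tendsto_nhds_unique (by simpa [hnorm1] using h1) h2
    have hinvt : Tendsto (fun j => ‖w₂ (ψ j + N)‖⁻¹) atTop (𝓝 0) :=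
      tendsto_inv_atTop_zero.comp (hub.comp hσt)
    have hsumt : Tendsto (fun j => w₁ (ψ j + N) + w₂ (ψ j + N)) atTop (𝓝 v) :=
      hst.comp hσt
    have hw1t : Tendsto (fun j => ‖w₂ (ψ j + N)‖⁻¹ • w₁ (ψ j + N)) atTop (𝓝 (-uu)) := by
      have heq : ∀ j, ‖w₂ (ψ j + N)‖⁻¹ • w₁ (ψ j + N)
          = ‖w₂ (ψ j + N)‖⁻¹ • (w₁ (ψ j + N) + w₂ (ψ j + N))
            - ‖w₂ (ψ j + N)‖⁻¹ • w₂ (ψ j + N) := by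
        intro j; rw [smul_add]; abel
      have ht : Tendsto (fun j => ‖w₂ (ψ j + N)‖⁻¹ • (w₁ (ψ j + N) + w₂ (ψ j + N))
          - ‖w₂ (ψ j + N)‖⁻¹ • w₂ (ψ j + N)) atTop (𝓝 ((0:ℝ) • v - uu)) :=
        (hinvt.smul hsumt).sub hψt
      rw [zero_smul, zero_sub] at ht
      simpa [← heq] using ht
    have hmem2 : uu ∈ limNormalCone C₂ x0 := by
      refine ⟨fun j => y₂ (ψ j + N), fun j => ‖w₂ (ψ j + N)‖⁻¹ • w₂ (ψ j + N),
        fun j => hy₂C _, fun j => smul_mem_reg (by positivity) (hw₂ _), ?_, hψt⟩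
      exact hy₂t.comp hσt
    have hmem1 : -uu ∈ limNormalCone C₁ x0 := by
      refine ⟨fun j => y₁ (ψ j + N), fun j => ‖w₂ (ψ j + N)‖⁻¹ • w₁ (ψ j + N),
        fun j => hy₁C _, fun j => smul_mem_reg (by positivity) (hw₁ _), ?_, hw1t⟩
      exact hy₁t.comp hσt
    have h0 : -uu = 0 := hq (-uu) hmem1 (by rw [neg_neg]; exact hmem2)
    have : uu = 0 := by
      have := congrArg Neg.neg h0
      rwa [neg_neg, neg_zero] at this
    rw [this, norm_zero] at hu1
    exact absurd hu1.symm one_ne_zero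

lemma initP_add {n} (a b : Eucl (n+1)) : initP (a + b) = initP a + initP b := by ext i; rfl
lemma initP_smul {n} (c : ℝ) (a : Eucl (n+1)) : initP (c • a) = c • initP a := by ext i; rfl
lemma initP_sub {n} (a b : Eucl (n+1)) : initP (a - b) = initP a - initP b := by ext i; rfl

lemma epi_closed {n} {f : Eucl n → EReal} (hlsc : LowerSemicontinuous f) :
    IsClosed (epiSet f) := by
  rw [← isOpen_compl_iff]
  rw [isOpen_iff_mem_nhds]
  intro z hz
  have hz' : ((z (Fin.last n) : ℝ) : EReal) < f (initP z) := by
    simpa [epiSet, not_le] using hz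
  obtain ⟨y, hy1, hy2⟩ := exists_between hz'
  have h1 : ∀ᶠ w in 𝓝 z, y < f (initP w) := by
    have := hlsc (initP z) y hy2
    exact (continuous_initP.tendsto z).eventually this
  have h2 : ∀ᶠ w in 𝓝 z, ((w (Fin.last n) : ℝ) : EReal) < y := by
    have hc : Continuous (fun w : Eucl (n+1) => ((w (Fin.last n) : ℝ) : EReal)) :=
      continuous_coe_real_ereal.comp ((continuous_apply _).comp (PiLp.continuous_ofLp _ _))
    have := (hc.tendsto z).eventually (tendsto_id.eventually_lt_const hy1)
    exact (hc.tendsto z) (Iio_mem_nhds hy1)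
  filter_upwards [h1, h2] with w hw1 hw2
  simp only [mem_compl_iff, epiSet, mem_setOf_eq, not_le]
  exact lt_trans hw2 hw1

lemma cyl_reg_fwd {n} {S : Set (Eucl n)} {z : Eucl (n+1)} (hz : initP z ∈ S) {v : Eucl (n+1)}
    (hv : v ∈ regNormalCone (initP ⁻¹' S) z) :
    v (Fin.last n) = 0 ∧ initP v ∈ regNormalCone S (initP z) := by
  have he : ∀ t : ℝ, z + t • snocP (0:Eucl n) 1 ∈ initP ⁻¹' S := by
    intro t
    have : initP (z + t • snocP (0:Eucl n) 1) = initP z := by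
      rw [initP_add, initP_smul, initP_snocP, smul_zero, add_zero]
    simpa [Set.mem_preimage, this] using hz
  have hnorm_e : ‖snocP (0:Eucl n) 1‖ = 1 := by
    have h := norm_sq_split (snocP (0:Eucl n) 1)
    rw [initP_snocP, snocP_last, norm_zero] at h
    nlinarith [norm_nonneg (snocP (0:Eucl n) 1)]
  have hinner : ∀ t : ℝ, (⟪v, (z + t • snocP (0:Eucl n) 1) - z⟫ : ℝ) = t * v (Fin.last n) := by
    intro t
    rw [add_sub_cancel_left, inner_smul_right, inner_split, initP_snocP, snocP_last,
      inner_zero_right, mul_one, zero_add]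
  have hkey : ∀ ε > 0, ∃ δ > 0, ∀ t : ℝ, |t| < δ → t * v (Fin.last n) ≤ ε * |t| := by
    intro ε hε
    obtain ⟨δ, hδ, hd⟩ := hv ε hε
    refine ⟨δ, hδ, fun t ht => ?_⟩
    have hnn : ‖(z + t • snocP (0:Eucl n) 1) - z‖ = |t| := by
      rw [add_sub_cancel_left, norm_smul, hnorm_e, mul_one, Real.norm_eq_abs]
    have := hd _ (he t) (by rw [hnn]; exact ht)
    rw [hinner t, hnn] at this
    exact this
  have habs : ∀ ε > 0, |v (Fin.last n)| ≤ ε := by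
    intro ε hε
    obtain ⟨δ, hδ, hd⟩ := hkey ε hε
    have h1 := hd (δ/2) (by rw [abs_of_pos (by linarith)]; linarith)
    have h2 := hd (-(δ/2)) (by rw [abs_neg, abs_of_pos (by linarith)]; linarith)
    rw [abs_of_pos (by linarith : (0:ℝ) < δ/2)] at h1
    rw [abs_neg, abs_of_pos (by linarith : (0:ℝ) < δ/2)] at h2
    rw [abs_le]
    constructor <;> nlinarith
  have hlast : v (Fin.last n) = 0 := by
    have h0 : |v (Fin.last n)| ≤ 0 := le_of_forall_pos_le_add (by
      intro ε hε; simpa using habs ε hε)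
    exact abs_nonpos_iff.1 h0
  refine ⟨hlast, ?_⟩
  intro ε hε
  obtain ⟨δ, hδ, hd⟩ := hv ε hε
  refine ⟨δ, hδ, fun s hs hns => ?_⟩
  have hy : snocP s (z (Fin.last n)) ∈ initP ⁻¹' S := by
    simpa [Set.mem_preimage, initP_snocP] using hs
  have hsub : snocP s (z (Fin.last n)) - z = snocP (s - initP z) 0 := by
    conv_lhs => rw [← snocP_initP z]
    rw [snocP_sub, snocP_last, sub_self]
  have hnrm : ‖snocP s (z (Fin.last n)) - z‖ = ‖s - initP z‖ := by
    rw [hsub, norm_snocP_zero]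
  have := hd _ hy (by rw [hnrm]; exact hns)
  rw [hsub, inner_split, initP_snocP, snocP_last, mul_zero, add_zero, norm_snocP_zero] at this
  exact this

lemma cyl_reg_bwd {n} {S : Set (Eucl n)} {p : Eucl n} {b : Eucl n} (c : ℝ)
    (hb : b ∈ regNormalCone S p) :
    snocP b 0 ∈ regNormalCone (initP ⁻¹' S) (snocP p c) := by
  intro ε hε
  obtain ⟨δ, hδ, hd⟩ := hb ε hε
  refine ⟨δ, hδ, fun y hy hny => ?_⟩
  have hsub : y - snocP p c = snocP (initP y - p) (y (Fin.last n) - c) := by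
    conv_lhs => rw [← snocP_initP y]
    rw [snocP_sub]
  have hni : ‖initP y - p‖ ≤ ‖y - snocP p c‖ := by
    calc ‖initP y - p‖ = ‖initP (y - snocP p c)‖ := by rw [initP_sub, initP_snocP]
      _ ≤ ‖y - snocP p c‖ := norm_initP_le _
  have hinner : (⟪snocP b 0, y - snocP p c⟫ : ℝ) = ⟪b, initP y - p⟫ := by
    rw [hsub, inner_split, initP_snocP, snocP_last, zero_mul, add_zero, initP_snocP]
  rw [hinner]
  calc (⟪b, initP y - p⟫ : ℝ) ≤ ε * ‖initP y - p‖ :=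
        hd _ hy (lt_of_le_of_lt hni hny)
    _ ≤ ε * ‖y - snocP p c‖ := mul_le_mul_of_nonneg_left hni hε.le

lemma cyl_lim_fwd {n} {S : Set (Eucl n)} {z : Eucl (n+1)} {u : Eucl (n+1)}
    (hu : u ∈ limNormalCone (initP ⁻¹' S) z) :
    u = snocP (initP u) 0 ∧ initP u ∈ limNormalCone S (initP z) := by
  obtain ⟨zs, vs, hzs, hvs, hzt, hvt⟩ := hu
  have hreg := fun k => cyl_reg_fwd (hzs k) (hvs k)
  have hlast : u (Fin.last n) = 0 := by
    have h1 : Tendsto (fun k => vs k (Fin.last n)) atTop (𝓝 (u (Fin.last n))) :=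
      (((continuous_apply (Fin.last n)).comp (PiLp.continuous_ofLp _ _)).tendsto u).comp hvt
    have h2 : (fun k => vs k (Fin.last n)) = fun _ => (0:ℝ) := funext fun k => (hreg k).1
    rw [h2] at h1
    exact (tendsto_nhds_unique tendsto_const_nhds h1).symm
  constructor
  · conv_lhs => rw [← snocP_initP u]
    rw [hlast]
  · exact ⟨fun k => initP (zs k), fun k => initP (vs k), fun k => hzs k,
      fun k => (hreg k).2, (continuous_initP.tendsto z).comp hzt,
      (continuous_initP.tendsto u).comp hvt⟩

lemma cyl_lim_bwd {n} {S : Set (Eucl n)} {x : Eucl n} {b : Eucl n} (c : ℝ)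
    (hb : b ∈ limNormalCone S x) :
    snocP b 0 ∈ limNormalCone (initP ⁻¹' S) (snocP x c) := by
  obtain ⟨ps, bs, hps, hbs, hpt, hbt⟩ := hb
  exact ⟨fun k => snocP (ps k) c, fun k => snocP (bs k) 0,
    fun k => by simpa [Set.mem_preimage, initP_snocP] using hps k,
    fun k => cyl_reg_bwd c (hbs k),
    ((continuous_snocP c).tendsto x).comp hpt,
    ((continuous_snocP 0).tendsto b).comp hbt⟩

theorem stmt10 {n : ℕ} (f : Eucl n → EReal) (S : Set (Eucl n))
    (hlsc : LowerSemicontinuous f) (hbot : ∀ x, f x ≠ ⊥) (hScl : IsClosed S)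
    (x : Eucl n) (hxS : x ∈ S) (hxd : f x ≠ ⊤)
    (hmin : ∃ U ∈ 𝓝 x, ∀ y ∈ S ∩ U, f x ≤ f y)
    (hqc : horizonSubdiff f x ∩ (-(limNormalCone S x)) = {0}) :
    (0 : Eucl n) ∈ limSubdiff f x + limNormalCone S x := by
  have hfx : f x = (((f x).toReal : ℝ) : EReal) := (EReal.coe_toReal hxd (hbot x)).symm
  have h₁ : IsClosed (epiSet f) := epi_closed hlsc
  have h₂ : IsClosed (initP ⁻¹' S : Set (Eucl (n+1))) := hScl.preimage continuous_initP
  have hz₁ : snocP x (f x).toReal ∈ epiSet f := by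
    show f (initP (snocP x (f x).toReal)) ≤ _
    rw [initP_snocP, snocP_last, ← hfx]
  have hz₂ : snocP x (f x).toReal ∈ initP ⁻¹' S := by
    simpa [Set.mem_preimage, initP_snocP] using hxS
  obtain ⟨U, hU, hUmin⟩ := hmin
  obtain ⟨δ₀, hδ₀, hball⟩ := Metric.mem_nhds_iff.1 hU
  have hreg0 : snocP (0 : Eucl n) (-1)
      ∈ regNormalCone (epiSet f ∩ initP ⁻¹' S) (snocP x (f x).toReal) := by
    intro ε hε
    refine ⟨δ₀, hδ₀, fun z hzC hnz => ?_⟩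
    have h1 : initP z ∈ S := hzC.2
    have hdini : ‖initP z - x‖ < δ₀ := by
      have he : initP z - x = initP (z - snocP x (f x).toReal) := by
        rw [initP_sub, initP_snocP]
      calc ‖initP z - x‖ = ‖initP (z - snocP x (f x).toReal)‖ := by rw [he]
        _ ≤ ‖z - snocP x (f x).toReal‖ := norm_initP_le _
        _ < δ₀ := hnz
    have h2 : initP z ∈ U := hball (by rw [Metric.mem_ball, dist_eq_norm]; exact hdini)
    have h3 : f x ≤ f (initP z) := hUmin _ ⟨h1, h2⟩
    have h4 : f (initP z) ≤ ((z (Fin.last n) : ℝ) : EReal) := hzC.1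
    have h5 : (f x).toReal ≤ z (Fin.last n) := by
      have := le_trans (hfx ▸ h3) h4
      exact_mod_cast this
    have h6 : (⟪snocP (0 : Eucl n) (-1), z - snocP x (f x).toReal⟫ : ℝ)
        = -(z (Fin.last n) - (f x).toReal) := by
      rw [inner_split, initP_snocP, inner_zero_left, snocP_last, zero_add]
      have hc : (z - snocP x (f x).toReal) (Fin.last n)
          = z (Fin.last n) - (f x).toReal := by
        show z (Fin.last n) - snocP x (f x).toReal (Fin.last n) = _
        rw [snocP_last]
      rw [hc]; ring
    rw [h6]
    have h7 : -(z (Fin.last n) - (f x).toReal) ≤ 0 := by linarith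
    have h8 : (0:ℝ) ≤ ε * ‖z - snocP x (f x).toReal‖ := by positivity
    linarith
  have hlim0 : snocP (0 : Eucl n) (-1)
      ∈ limNormalCone (epiSet f ∩ initP ⁻¹' S) (snocP x (f x).toReal) :=
    reg_subset_lim (Set.mem_inter hz₁ hz₂) hreg0
  have hq : ∀ u : Eucl (n+1), u ∈ limNormalCone (epiSet f) (snocP x (f x).toReal) →
      -u ∈ limNormalCone (initP ⁻¹' S) (snocP x (f x).toReal) → u = 0 := by
    intro u hu1 hu2
    obtain ⟨heq, hb⟩ := cyl_lim_fwd hu2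
    rw [initP_snocP] at hb
    have hu_eq : u = snocP (-(initP (-u))) 0 := by
      have h := congrArg Neg.neg heq
      rw [neg_neg, neg_snocP, neg_zero] at h
      exact h
    have hh : -(initP (-u)) ∈ horizonSubdiff f x := by
      show snocP (-(initP (-u))) 0 ∈ limNormalCone (epiSet f) (snocP x (f x).toReal)
      rw [← hu_eq]
      exact hu1
    have hmem : -(initP (-u)) ∈ -(limNormalCone S x) := by
      rw [Set.mem_neg, neg_neg]
      exact hb
    have h0 : -(initP (-u)) ∈ ({0} : Set (Eucl n)) := by
      rw [← hqc]; exact ⟨hh, hmem⟩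
    have hb0 : -(initP (-u)) = (0 : Eucl n) := h0
    rw [hu_eq, hb0, snocP_zero]
  obtain ⟨u₁, hu₁, u₂, hu₂, hsum⟩ := exact_rule h₁ h₂ hq hlim0
  obtain ⟨heq2, hb2⟩ := cyl_lim_fwd hu₂
  rw [initP_snocP] at hb2
  have hu1eq : u₁ = snocP (-(initP u₂)) (-1) := by
    have h : u₁ = snocP (0 : Eucl n) (-1) - u₂ := by rw [← hsum]; abel
    rw [h]
    conv_lhs => rw [heq2]
    rw [snocP_sub, zero_sub, sub_zero]
  have hsubd : -(initP u₂) ∈ limSubdiff f x := by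
    show snocP (-(initP u₂)) (-1) ∈ limNormalCone (epiSet f) (snocP x (f x).toReal)
    rw [← hu1eq]
    exact hu₁
  have hfinal := Set.add_mem_add hsubd hb2
  rwa [neg_add_cancel] at hfinal
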